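/- arXiv:2111.06114 — 5 statements merged into one kernel-verified Lean document; each statement's English description precedes it below -/
import Mathlib

section
/- Let A₁ and A₂ be K-algebras such that the tensor product algebra A₁ ⊗ A₂ is commutative and (A₁ ⊗ A₂)² ≠ 0. Then either both A₁ and A₂ are commutative, or both are zero-square algebras. -/
open scoped TensorProduct

/-- The square `B²` of an algebra `B`: the linear span of all products. -/
def algebraSquare (K : Type*) [Field K] (B : Type*) [NonUnitalNonAssocRing B]
    [Module K B] : Submodule K B :=
  Submodule.span K {z : B | ∃ x y : B, z = x * y}

/-
Commutativity of `A₁ ⊗ A₂` on pure tensors gives `aa' ⊗ bb' = a'a ⊗ b'b`. Over a field a pure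
tensor vanishes only if a factor does, so a nonzero square `b²` in `A₂` forces `A₁` to be
commutative, and then any nonzero product `aa'` in `A₁` forces `A₂` to be commutative; nonzero
products exist in both factors because `(A₁ ⊗ A₂)² ≠ 0`. By symmetry, either both factors are
commutative or neither has a nonzero square.
-/

theorem TensorProduct.tmul_eq_zero_iff {K M N : Type*} [Field K] [AddCommGroup M] [Module K M]
    [AddCommGroup N] [Module K N] {x : M} {y : N} : x ⊗ₜ[K] y = 0 ↔ x = 0 ∨ y = 0 := by
  refine ⟨fun h => ?_, by rintro (rfl | rfl) <;> simp⟩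
  by_contra! ⟨hx, hy⟩
  obtain ⟨φ, hφ⟩ : ∃ φ : Module.Dual K N, φ y ≠ 0 := by
    simpa using (Module.forall_dual_apply_eq_zero_iff K y).not.mpr hy
  have := congrArg (fun t => TensorProduct.rid K M (φ.lTensor M t)) h
  simp only [LinearMap.lTensor_tmul, TensorProduct.rid_tmul, map_zero] at this
  exact (smul_eq_zero.mp this).elim hφ hx

section TmulMulComm

variable (K : Type*) [Field K] (A₁ A₂ : Type*) [Mul A₁] [AddCommGroup A₁] [Module K A₁]
  [Mul A₂] [AddCommGroup A₂] [Module K A₂]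

def TmulMulComm : Prop :=
  ∀ (a a' : A₁) (b b' : A₂), (a * a') ⊗ₜ[K] (b * b') = (a' * a) ⊗ₜ[K] (b' * b)

variable {K A₁ A₂}

theorem TmulMulComm.symm (h : TmulMulComm K A₁ A₂) : TmulMulComm K A₂ A₁ := fun b b' a a' => by
  simpa only [TensorProduct.comm_tmul] using congrArg (TensorProduct.comm K A₁ A₂) (h a a' b b')

theorem TmulMulComm.mul_comm_of_mul_self_ne_zero (h : TmulMulComm K A₁ A₂) {b : A₂}
    (hb : b * b ≠ 0) (a a' : A₁) : a * a' = a' * a := by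
  have hsub : (a * a' - a' * a) ⊗ₜ[K] (b * b) = 0 := by
    rw [TensorProduct.sub_tmul, h a a' b b, sub_self]
  exact sub_eq_zero.mp ((TensorProduct.tmul_eq_zero_iff.mp hsub).resolve_right hb)

theorem TmulMulComm.mul_comm_of_mul_comm_of_mul_ne_zero (h : TmulMulComm K A₁ A₂)
    (hcomm : ∀ a a' : A₁, a * a' = a' * a) {a a' : A₁} (ha : a * a' ≠ 0) (b b' : A₂) :
    b * b' = b' * b := by
  have hsub : (a * a') ⊗ₜ[K] (b * b' - b' * b) = 0 := by
    rw [TensorProduct.tmul_sub, h a a' b b', hcomm a a', sub_self]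
  exact sub_eq_zero.mp ((TensorProduct.tmul_eq_zero_iff.mp hsub).resolve_left ha)

theorem TmulMulComm.mul_comm_and_mul_comm (h : TmulMulComm K A₁ A₂) (hb : ∃ b : A₂, b * b ≠ 0)
    (ha : ∃ a a' : A₁, a * a' ≠ 0) :
    (∀ a a' : A₁, a * a' = a' * a) ∧ ∀ b b' : A₂, b * b' = b' * b := by
  obtain ⟨b, hb⟩ := hb
  obtain ⟨a, a', ha⟩ := ha
  have hcomm := h.mul_comm_of_mul_self_ne_zero hb
  exact ⟨hcomm, h.mul_comm_of_mul_comm_of_mul_ne_zero hcomm ha⟩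

end TmulMulComm

theorem mul_eq_zero_of_tmul_mul_tmul_eq_zero {R A₁ A₂ : Type*} [CommSemiring R]
    [NonUnitalNonAssocSemiring A₁] [Module R A₁] [SMulCommClass R A₁ A₁] [IsScalarTower R A₁ A₁]
    [NonUnitalNonAssocSemiring A₂] [Module R A₂] [SMulCommClass R A₂ A₂] [IsScalarTower R A₂ A₂]
    (h : ∀ (a a' : A₁) (b b' : A₂), (a * a') ⊗ₜ[R] (b * b') = 0) (z w : A₁ ⊗[R] A₂) :
    z * w = 0 := by
  induction z using TensorProduct.induction_on with
  | zero => rw [zero_mul]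
  | add z₁ z₂ h₁ h₂ => rw [add_mul, h₁, h₂, add_zero]
  | tmul a b =>
    induction w using TensorProduct.induction_on with
    | zero => rw [mul_zero]
    | add w₁ w₂ h₁ h₂ => rw [mul_add, h₁, h₂, add_zero]
    | tmul a' b' => rw [Algebra.TensorProduct.tmul_mul_tmul, h]

theorem tmulMulComm_of_mul_comm {K A₁ A₂ : Type*} [Field K]
    [NonUnitalNonAssocRing A₁] [Module K A₁] [SMulCommClass K A₁ A₁] [IsScalarTower K A₁ A₁]
    [NonUnitalNonAssocRing A₂] [Module K A₂] [SMulCommClass K A₂ A₂] [IsScalarTower K A₂ A₂]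
    (hcomm : ∀ z w : A₁ ⊗[K] A₂, z * w = w * z) : TmulMulComm K A₁ A₂ := fun a a' b b' => by
  simpa only [Algebra.TensorProduct.tmul_mul_tmul] using hcomm (a ⊗ₜ b) (a' ⊗ₜ b')

theorem algebraSquare_eq_bot_iff {K B : Type*} [Field K] [NonUnitalNonAssocRing B] [Module K B] :
    algebraSquare K B = ⊥ ↔ ∀ x y : B, x * y = 0 := by
  simp only [algebraSquare, Submodule.span_eq_bot, Set.mem_ofPred_eq, forall_exists_index]
  exact ⟨fun h x y => h _ x y rfl, by rintro h _ x y rfl; exact h x y⟩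

theorem exists_mul_ne_zero_of_algebraSquare_tensor_ne_bot {K A₁ A₂ : Type*} [Field K]
    [NonUnitalNonAssocRing A₁] [Module K A₁] [SMulCommClass K A₁ A₁] [IsScalarTower K A₁ A₁]
    [NonUnitalNonAssocRing A₂] [Module K A₂] [SMulCommClass K A₂ A₂] [IsScalarTower K A₂ A₂]
    (hsq : algebraSquare K (A₁ ⊗[K] A₂) ≠ ⊥) :
    (∃ a a' : A₁, a * a' ≠ 0) ∧ ∃ b b' : A₂, b * b' ≠ 0 := by
  rw [Ne, algebraSquare_eq_bot_iff] at hsq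
  constructor
  · by_contra! h
    exact hsq (mul_eq_zero_of_tmul_mul_tmul_eq_zero fun a a' b b' => by
      rw [h, TensorProduct.zero_tmul])
  · by_contra! h
    exact hsq (mul_eq_zero_of_tmul_mul_tmul_eq_zero fun a a' b b' => by
      rw [h, TensorProduct.tmul_zero])

/-- If the tensor product `A₁ ⊗ A₂` is commutative and `(A₁ ⊗ A₂)² ≠ 0`, then
either both `A₁` and `A₂` are commutative, or both are zero-square algebras. -/
theorem comm_or_zeroSquare_of_tensor_comm (K : Type*) [Field K]
    (A₁ A₂ : Type*) [NonUnitalNonAssocRing A₁] [NonUnitalNonAssocRing A₂]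
    [Module K A₁] [SMulCommClass K A₁ A₁] [IsScalarTower K A₁ A₁]
    [Module K A₂] [SMulCommClass K A₂ A₂] [IsScalarTower K A₂ A₂]
    (hcomm : ∀ z w : A₁ ⊗[K] A₂, z * w = w * z)
    (hsq : algebraSquare K (A₁ ⊗[K] A₂) ≠ ⊥) :
    ((∀ x y : A₁, x * y = y * x) ∧ (∀ x y : A₂, x * y = y * x)) ∨
      ((∀ x : A₁, x * x = 0) ∧ (∀ x : A₂, x * x = 0)) := by
  have h := tmulMulComm_of_mul_comm hcomm
  obtain ⟨h₁, h₂⟩ := exists_mul_ne_zero_of_algebraSquare_tensor_ne_bot hsq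
  by_cases hb : ∃ b : A₂, b * b ≠ 0
  · exact .inl (h.mul_comm_and_mul_comm hb h₁)
  by_cases ha : ∃ a : A₁, a * a ≠ 0
  · exact .inl (h.symm.mul_comm_and_mul_comm ha h₂).symm
  simp only [not_exists, not_not] at ha hb
  exact .inr ⟨ha, hb⟩
end

section
/- Let A₁ and A₂ be nonzero K-algebras. Then A₁ and A₂ are both perfect (Aᵢ² = Aᵢ) if and only if A₁ ⊗ A₂ is perfect ((A₁⊗A₂)² = A₁⊗A₂). -/
open scoped TensorProduct

/-!
`(A₁ ⊗ A₂)²` is spanned by the tensors `x ⊗ y` with `x ∈ A₁²`, `y ∈ A₂²`, since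
`(a ⊗ b)(c ⊗ d) = ac ⊗ bd`. If both squares are everything, these span `A₁ ⊗ A₂`.
Conversely, a functional `f` on `A₁` vanishing on `A₁²` yields `a ⊗ b ↦ f a • b`, which
vanishes on `A₁² ⊗ A₂`; if this is all of `A₁ ⊗ A₂` and `A₂ ≠ 0`, then `f = 0`, so `A₁² = A₁`.
-/

namespace Submodule

variable {K M N : Type*} [Field K] [AddCommGroup M] [Module K M] [AddCommGroup N] [Module K N]

theorem eq_top_of_map₂_mk_eq_top_left [Nontrivial N] {P : Submodule K M} {Q : Submodule K N}
    (h : map₂ (TensorProduct.mk K M N) P Q = ⊤) : P = ⊤ := by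
  by_contra hP
  obtain ⟨f, hf, hfP⟩ := exists_dual_map_eq_bot_of_lt_top (lt_top_iff_ne_top.2 hP) inferInstance
  obtain ⟨b, hb⟩ := exists_ne (0 : N)
  let φ : M ⊗[K] N →ₗ[K] N := TensorProduct.lift ((LinearMap.lsmul K N).comp f)
  have hφ : map₂ (TensorProduct.mk K M N) P Q ≤ LinearMap.ker φ := by
    refine map₂_le.2 fun m hm n _ => ?_
    have hfm : f m = 0 := by simpa [hfP] using mem_map_of_mem (f := f) hm
    simp [φ, hfm]
  refine hf (LinearMap.ext fun a => ?_)
  have hab : f a • b = 0 := by simpa [φ] using hφ (h ▸ mem_top : a ⊗ₜ[K] b ∈ _)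
  simpa [hb] using hab

theorem eq_top_of_map₂_mk_eq_top_right [Nontrivial M] {P : Submodule K M} {Q : Submodule K N}
    (h : map₂ (TensorProduct.mk K M N) P Q = ⊤) : Q = ⊤ := by
  refine eq_top_of_map₂_mk_eq_top_left (P := Q) (Q := P) ?_
  have hcomm : (TensorProduct.mk K M N).compr₂ (TensorProduct.comm K M N).toLinearMap =
      (TensorProduct.mk K N M).flip := by
    ext; rfl
  rw [← map₂_flip, ← hcomm, ← map_map₂, h, map_top, LinearEquiv.range]

end Submodule

section TensorProduct

variable {K : Type*} [Field K]

theorem mul_mem_algebraSquare {B : Type*} [NonUnitalNonAssocRing B] [Module K B] (x y : B) :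
    x * y ∈ algebraSquare K B :=
  Submodule.subset_span ⟨x, y, rfl⟩

variable {A₁ A₂ : Type*} [NonUnitalNonAssocRing A₁] [NonUnitalNonAssocRing A₂]
    [Module K A₁] [SMulCommClass K A₁ A₁] [IsScalarTower K A₁ A₁]
    [Module K A₂] [SMulCommClass K A₂ A₂] [IsScalarTower K A₂ A₂]

theorem algebraSquare_tensorProduct :
    algebraSquare K (A₁ ⊗[K] A₂) =
      Submodule.map₂ (TensorProduct.mk K A₁ A₂) (algebraSquare K A₁) (algebraSquare K A₂) := by
  apply le_antisymm
  · rw [algebraSquare, Submodule.span_le]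
    rintro _ ⟨s, t, rfl⟩
    induction s using TensorProduct.induction_on with
    | zero => simp
    | add s s' hs hs' => rw [add_mul]; exact add_mem hs hs'
    | tmul a b =>
      induction t using TensorProduct.induction_on with
      | zero => simp
      | add t t' ht ht' => rw [mul_add]; exact add_mem ht ht'
      | tmul c d =>
        rw [Algebra.TensorProduct.tmul_mul_tmul]
        exact Submodule.apply_mem_map₂ _ (mul_mem_algebraSquare a c) (mul_mem_algebraSquare b d)
  · rw [algebraSquare, algebraSquare, Submodule.map₂_span_span, Submodule.span_le]
    rintro _ ⟨_, ⟨a, c, rfl⟩, _, ⟨b, d, rfl⟩, rfl⟩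
    exact Submodule.subset_span
      ⟨a ⊗ₜ[K] b, c ⊗ₜ[K] d, (Algebra.TensorProduct.tmul_mul_tmul a c b d).symm⟩

end TensorProduct

/-- For nonzero `K`-algebras `A₁`, `A₂`: both `A₁` and `A₂` are perfect
(`Aᵢ² = Aᵢ`) iff the tensor product `A₁ ⊗ A₂` is perfect. -/
theorem perfect_iff_tensor_perfect (K : Type*) [Field K]
    (A₁ A₂ : Type*) [NonUnitalNonAssocRing A₁] [NonUnitalNonAssocRing A₂]
    [Nontrivial A₁] [Nontrivial A₂]
    [Module K A₁] [SMulCommClass K A₁ A₁] [IsScalarTower K A₁ A₁]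
    [Module K A₂] [SMulCommClass K A₂ A₂] [IsScalarTower K A₂ A₂] :
    (algebraSquare K A₁ = ⊤ ∧ algebraSquare K A₂ = ⊤) ↔
      algebraSquare K (A₁ ⊗[K] A₂) = ⊤ := by
  rw [algebraSquare_tensorProduct]
  refine ⟨fun ⟨h₁, h₂⟩ => ?_, fun h => ⟨?_, ?_⟩⟩
  · rw [h₁, h₂, TensorProduct.map₂_mk_top_top_eq_top]
  · exact Submodule.eq_top_of_map₂_mk_eq_top_left h
  · exact Submodule.eq_top_of_map₂_mk_eq_top_right h
end

section
/- If A₁ and A₂ are evolution algebras over K, then A₁ ⊗ A₂ is an evolution algebra over K; more precisely, if {eᵢ} is a natural basis of A₁ and {fⱼ} is a natural basis of A₂, then {eᵢ ⊗ fⱼ} is a natural basis of A₁ ⊗ A₂ (distinct basis elements multiply to zero). -/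
open scoped TensorProduct

namespace Algebra.TensorProduct

variable {R A B : Type*} [CommSemiring R]
  [NonUnitalNonAssocSemiring A] [Module R A] [SMulCommClass R A A] [IsScalarTower R A A]
  [NonUnitalNonAssocSemiring B] [Module R B] [SMulCommClass R B B] [IsScalarTower R B B]

theorem mul_comm_of_forall_mul_comm (hA : ∀ x y : A, x * y = y * x)
    (hB : ∀ x y : B, x * y = y * x) (z w : A ⊗[R] B) : z * w = w * z := by
  induction z using TensorProduct.induction_on with
  | zero => simp
  | add z z' hz hz' => rw [add_mul, mul_add, hz, hz']
  | tmul a b =>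
    induction w using TensorProduct.induction_on with
    | zero => simp
    | add w w' hw hw' => rw [mul_add, add_mul, hw, hw']
    | tmul c d => rw [tmul_mul_tmul, tmul_mul_tmul, hA, hB]

theorem tmul_mul_tmul_eq_zero_of_ne {ι κ : Type*} {e : ι → A} {f : κ → B}
    (he : Pairwise fun i j ↦ e i * e j = 0) (hf : Pairwise fun k l ↦ f k * f l = 0)
    {p q : ι × κ} (hpq : p ≠ q) : (e p.1 ⊗ₜ[R] f p.2) * (e q.1 ⊗ₜ[R] f q.2) = 0 := by
  rw [tmul_mul_tmul]
  rcases not_and_or.mp (mt Prod.ext_iff.mpr hpq) with h | h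
  · rw [he h, TensorProduct.zero_tmul]
  · rw [hf h, TensorProduct.tmul_zero]

end Algebra.TensorProduct

/-- If `{eᵢ}` is a natural basis of the evolution algebra `A₁` and `{fⱼ}` is a
natural basis of `A₂`, then `{eᵢ ⊗ fⱼ}` is a natural basis of `A₁ ⊗ A₂`:
distinct basis elements multiply to zero (and the tensor product remains
commutative), so `A₁ ⊗ A₂` is again an evolution algebra. -/
theorem tensor_evolution (K : Type*) [Field K]
    (A₁ A₂ : Type*) [NonUnitalNonAssocRing A₁] [NonUnitalNonAssocRing A₂]
    [Module K A₁] [SMulCommClass K A₁ A₁] [IsScalarTower K A₁ A₁]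
    [Module K A₂] [SMulCommClass K A₂ A₂] [IsScalarTower K A₂ A₂]
    (hc₁ : ∀ x y : A₁, x * y = y * x) (hc₂ : ∀ x y : A₂, x * y = y * x)
    {ι κ : Type*} (b₁ : Module.Basis ι K A₁) (b₂ : Module.Basis κ K A₂)
    (h₁ : ∀ i j, i ≠ j → b₁ i * b₁ j = 0)
    (h₂ : ∀ i j, i ≠ j → b₂ i * b₂ j = 0) :
    (∀ z w : A₁ ⊗[K] A₂, z * w = w * z) ∧
      ∀ p q : ι × κ, p ≠ q →
        (Module.Basis.tensorProduct b₁ b₂) p * (Module.Basis.tensorProduct b₁ b₂) q = 0 := by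
  refine ⟨Algebra.TensorProduct.mul_comm_of_forall_mul_comm hc₁ hc₂, fun p q hpq ↦ ?_⟩
  simp only [Module.Basis.tensorProduct_apply']
  exact Algebra.TensorProduct.tmul_mul_tmul_eq_zero_of_ne h₁ h₂ hpq
end

section
/- Let A₁ and A₂ be finite-dimensional evolution algebras with natural bases B₁ = {e₁,…,eₙ}, B₂ = {f₁,…,f_m} and structure matrices M₁ and M₂ respectively. Then the structure matrix of A₁ ⊗ A₂ relative to the natural basis {eᵢ ⊗ fⱼ} (ordered lexicographically) is the Kronecker product M₁ ⊗ M₂. -/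
open scoped TensorProduct Kronecker

namespace Module.Basis

variable {R A B ι κ : Type*} [CommSemiring R]
  [NonUnitalNonAssocSemiring A] [Module R A] [SMulCommClass R A A] [IsScalarTower R A A]
  [NonUnitalNonAssocSemiring B] [Module R B] [SMulCommClass R B B] [IsScalarTower R B B]

noncomputable def structureMatrix (b : Basis ι R A) : Matrix ι ι R :=
  fun k i => b.repr (b i * b i) k

theorem tensorProduct_apply_mul_self (b : Basis ι R A) (c : Basis κ R B) (q : ι × κ) :
    tensorProduct b c q * tensorProduct b c q = (b q.1 * b q.1) ⊗ₜ (c q.2 * c q.2) := by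
  rw [tensorProduct_apply', Algebra.TensorProduct.tmul_mul_tmul]

theorem structureMatrix_tensorProduct (b : Basis ι R A) (c : Basis κ R B) :
    structureMatrix (tensorProduct b c) = structureMatrix b ⊗ₖ structureMatrix c := by
  ext ⟨k, t⟩ q
  rw [structureMatrix, tensorProduct_apply_mul_self, tensorProduct_repr_tmul_apply,
    Matrix.kronecker_apply, smul_eq_mul, mul_comm]
  rfl

end Module.Basis

theorem tensor_structure_matrix_general (K : Type*) [Field K]
    (A₁ A₂ : Type*) [NonUnitalNonAssocRing A₁] [NonUnitalNonAssocRing A₂]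
    [Module K A₁] [SMulCommClass K A₁ A₁] [IsScalarTower K A₁ A₁]
    [Module K A₂] [SMulCommClass K A₂ A₂] [IsScalarTower K A₂ A₂]
    {n m : ℕ} (b₁ : Module.Basis (Fin n) K A₁) (b₂ : Module.Basis (Fin m) K A₂)
    (M₁ : Matrix (Fin n) (Fin n) K) (M₂ : Matrix (Fin m) (Fin m) K)
    (hM₁ : ∀ k i, M₁ k i = b₁.repr (b₁ i * b₁ i) k)
    (hM₂ : ∀ t j, M₂ t j = b₂.repr (b₂ j * b₂ j) t) :
    ∀ (p q : Fin n × Fin m),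
      (Module.Basis.tensorProduct b₁ b₂).repr
          ((Module.Basis.tensorProduct b₁ b₂) q * (Module.Basis.tensorProduct b₁ b₂) q) p =
        (M₁ ⊗ₖ M₂) p q := by
  have hM₁ : M₁ = b₁.structureMatrix := Matrix.ext hM₁
  have hM₂ : M₂ = b₂.structureMatrix := Matrix.ext hM₂
  intro p q
  rw [hM₁, hM₂, ← Module.Basis.structureMatrix_tensorProduct]
  rfl

/-- The structure matrix of the tensor product of two finite-dimensional
evolution algebras (w.r.t. the natural basis `{eᵢ ⊗ fⱼ}`) is the Kronecker
product of the structure matrices: here `M₁ k i` and `M₂ t j` are the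
structure constants defined by `eᵢ² = Σ_k M₁ k i • e_k`, `fⱼ² = Σ_t M₂ t j • f_t`. -/
theorem tensor_structure_matrix (K : Type*) [Field K]
    (A₁ A₂ : Type*) [NonUnitalNonAssocRing A₁] [NonUnitalNonAssocRing A₂]
    [Module K A₁] [SMulCommClass K A₁ A₁] [IsScalarTower K A₁ A₁]
    [Module K A₂] [SMulCommClass K A₂ A₂] [IsScalarTower K A₂ A₂]
    {n m : ℕ} (b₁ : Module.Basis (Fin n) K A₁) (b₂ : Module.Basis (Fin m) K A₂)
    (h₁ : ∀ i j, i ≠ j → b₁ i * b₁ j = 0)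
    (h₂ : ∀ i j, i ≠ j → b₂ i * b₂ j = 0)
    (M₁ : Matrix (Fin n) (Fin n) K) (M₂ : Matrix (Fin m) (Fin m) K)
    (hM₁ : ∀ k i, M₁ k i = b₁.repr (b₁ i * b₁ i) k)
    (hM₂ : ∀ t j, M₂ t j = b₂.repr (b₂ j * b₂ j) t) :
    ∀ (p q : Fin n × Fin m),
      (Module.Basis.tensorProduct b₁ b₂).repr
          ((Module.Basis.tensorProduct b₁ b₂) q * (Module.Basis.tensorProduct b₁ b₂) q) p =
        (M₁ ⊗ₖ M₂) p q :=
  tensor_structure_matrix_general K A₁ A₂ b₁ b₂ M₁ M₂ hM₁ hM₂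
end

section
/- Let A₁ and A₂ be K-algebras such that A₁ ⊗ A₂ is an evolution algebra, and suppose A₂ has an ideal J of codimension 1 with A₂² ⊄ J. Then A₁ is an evolution algebra. (Proof idea: the quotient gives an algebra epimorphism φ: A₂ → K, and Ω: A₁⊗A₂ → A₁, a⊗b ↦ φ(b)a, is a surjective algebra homomorphism; every epimorphic image of an evolution algebra is an evolution algebra.) -/
open scoped TensorProduct

/-- A `K`-algebra is an evolution algebra if it is commutative and admits a
natural basis: a basis in which distinct basis elements multiply to zero. -/
def IsEvolutionAlgebra (K : Type*) [Field K] (A : Type*) [NonUnitalNonAssocRing A]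
    [Module K A] : Prop :=
  (∀ x y : A, x * y = y * x) ∧
    ∃ (s : Set A) (b : Module.Basis s K A), ∀ i j : s, i ≠ j → (b i) * (b j) = 0

/-!
The quotient by the codimension-one ideal `J` gives a functional `ψ : A₂ → K` whose kernel is an
ideal, so `ψ (x * y) = c * ψ x * ψ y` for a constant `c`, and `c ≠ 0` because `A₂² ⊄ J`. Thus
`φ = c • ψ` is a surjective character of `A₂`, and `a ⊗ b ↦ φ b • a` is a surjective algebra
homomorphism `A₁ ⊗ A₂ → A₁`. The images of a natural basis of `A₁ ⊗ A₂` span `A₁` and still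
multiply pairwise to zero, so any basis extracted from them is natural.
-/

section NaturalBasis

variable {K B : Type*} [Field K] [NonUnitalNonAssocRing B] [Module K B]

theorem exists_natural_basis_of_span_eq_top {S : Set B} (hspan : Submodule.span K S = ⊤)
    (hS : S.Pairwise fun x y => x * y = 0) :
    ∃ (s : Set B) (b : Module.Basis s K B), ∀ i j : s, i ≠ j → b i * b j = 0 := by
  refine ⟨_, Module.Basis.ofSpan hspan.ge, fun i j hij => ?_⟩
  have hsub := (linearIndepOn_empty K (id : B → B)).extend_subset (Set.empty_subset S)
  rw [Module.Basis.ofSpan_apply_self, Module.Basis.ofSpan_apply_self]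
  exact hS (hsub i.2) (hsub j.2) (Subtype.coe_injective.ne hij)

theorem IsEvolutionAlgebra.of_surjective {A : Type*} [NonUnitalNonAssocRing A] [Module K A]
    (hA : IsEvolutionAlgebra K A) (f : A →ₙₐ[K] B) (hf : Function.Surjective f) :
    IsEvolutionAlgebra K B := by
  obtain ⟨hcomm, s, b, hb⟩ := hA
  refine ⟨fun x y => ?_, exists_natural_basis_of_span_eq_top (S := f '' Set.range b) ?_ ?_⟩
  · obtain ⟨u, rfl⟩ := hf x
    obtain ⟨v, rfl⟩ := hf y
    rw [← map_mul, hcomm, map_mul]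
  · change Submodule.span K ((f : A →ₗ[K] B) '' Set.range b) = ⊤
    rw [Submodule.span_image, b.span_eq, Submodule.map_top, LinearMap.range_eq_top.2 hf]
  · rintro _ ⟨_, ⟨i, rfl⟩, rfl⟩ _ ⟨_, ⟨j, rfl⟩, rfl⟩ hne
    have hij : i ≠ j := fun h => hne (h ▸ rfl)
    rw [← map_mul, hb i j hij, map_zero]

end NaturalBasis

section Character

variable {K A : Type*} [Field K] [NonUnitalNonAssocRing A] [Module K A]
  [SMulCommClass K A A] [IsScalarTower K A A]

theorem LinearMap.map_mul_of_ker_isIdeal (ψ : A →ₗ[K] K)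
    (hker : ∀ a x, ψ x = 0 → ψ (a * x) = 0 ∧ ψ (x * a) = 0) {u : A} (hu : ψ u = 1) (x y : A) :
    ψ (x * y) = ψ (u * u) * (ψ x * ψ y) := by
  have hx : ψ (x - ψ x • u) = 0 := by simp [hu]
  have hy : ψ (y - ψ y • u) = 0 := by simp [hu]
  have hdecomp : x * y =
      (x - ψ x • u) * y + ψ x • (u * (y - ψ y • u)) + (ψ x * ψ y) • (u * u) := by
    simp only [sub_mul, mul_sub, smul_mul_assoc, mul_smul_comm, smul_sub, smul_smul]
    abel
  rw [hdecomp, map_add, map_add, map_smul, map_smul, (hker y _ hx).2, (hker u _ hy).1,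
    smul_eq_mul, smul_eq_mul]
  ring

theorem exists_surjective_character_of_ker_isIdeal (ψ : A →ₗ[K] K)
    (hψ : Function.Surjective ψ) (hker : ∀ a x, ψ x = 0 → ψ (a * x) = 0 ∧ ψ (x * a) = 0)
    (hsq : ∃ x y, ψ (x * y) ≠ 0) : ∃ φ : A →ₙₐ[K] K, Function.Surjective φ := by
  obtain ⟨u, hu⟩ := hψ 1
  have hmul := ψ.map_mul_of_ker_isIdeal hker hu
  set c := ψ (u * u)
  have hc : c ≠ 0 := by
    obtain ⟨x, y, hxy⟩ := hsq
    exact left_ne_zero_of_mul (hmul x y ▸ hxy)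
  refine ⟨{ c • ψ with map_zero' := (c • ψ).map_zero, map_mul' := fun x y => ?_ }, fun k => ?_⟩
  · simp only [AddHom.toFun_eq_coe, LinearMap.coe_toAddHom, LinearMap.smul_apply, smul_eq_mul,
      hmul]
    ring
  · obtain ⟨x, hx⟩ := hψ (c⁻¹ * k)
    exact ⟨x, by simp [hx, hc]⟩

theorem Submodule.exists_surjective_linearMap_ker_eq_of_finrank_quotient_eq_one
    {V : Type*} [AddCommGroup V] [Module K V] {J : Submodule K V}
    (hcodim : Module.finrank K (V ⧸ J) = 1) :
    ∃ ψ : V →ₗ[K] K, Function.Surjective ψ ∧ LinearMap.ker ψ = J := by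
  have : FiniteDimensional K (V ⧸ J) := Module.finite_of_finrank_eq_succ hcodim
  let e := LinearEquiv.ofFinrankEq (V ⧸ J) K (by rw [hcodim, Module.finrank_self])
  exact ⟨e ∘ₗ J.mkQ, e.surjective.comp J.mkQ_surjective, by
    rw [LinearEquiv.ker_comp, Submodule.ker_mkQ]⟩

theorem Submodule.exists_surjective_character_of_finrank_quotient_eq_one (J : Submodule K A)
    (hJ : ∀ a x, x ∈ J → a * x ∈ J ∧ x * a ∈ J) (hcodim : Module.finrank K (A ⧸ J) = 1)
    (hsq : ¬ algebraSquare K A ≤ J) : ∃ φ : A →ₙₐ[K] K, Function.Surjective φ := by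
  obtain ⟨ψ, hψ, hker⟩ := exists_surjective_linearMap_ker_eq_of_finrank_quotient_eq_one hcodim
  have hmem : ∀ x, ψ x = 0 ↔ x ∈ J := fun x => by rw [← hker, LinearMap.mem_ker]
  refine exists_surjective_character_of_ker_isIdeal ψ hψ (fun a x hx => ?_) ?_
  · simpa only [hmem] using hJ a x ((hmem x).1 hx)
  · obtain ⟨_, ⟨x, y, rfl⟩, hxy⟩ := Set.not_subset.1 (mt Submodule.span_le.2 hsq)
    exact ⟨x, y, fun h => hxy ((hmem _).1 h)⟩

end Character

namespace Algebra.TensorProduct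

variable {R A B : Type*} [CommSemiring R]
  [NonUnitalNonAssocSemiring A] [Module R A] [SMulCommClass R A A] [IsScalarTower R A A]
  [NonUnitalNonAssocSemiring B] [Module R B] [SMulCommClass R B B] [IsScalarTower R B B]

noncomputable def ridOfCharacter (φ : B →ₙₐ[R] R) : A ⊗[R] B →ₙₐ[R] A :=
  { _root_.TensorProduct.rid R A ∘ₗ LinearMap.lTensor A (φ : B →ₗ[R] R) with
    map_zero' := map_zero _
    map_mul' := fun x y => by
      dsimp only [AddHom.toFun_eq_coe, LinearMap.coe_toAddHom]
      induction x with
      | zero => simp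
      | add u v hu hv => simp only [add_mul, map_add, hu, hv]
      | tmul a b =>
        induction y with
        | zero => simp
        | add u v hu hv => simp only [mul_add, map_add, hu, hv]
        | tmul a' b' => simp [smul_mul_smul_comm] }

@[simp]
theorem ridOfCharacter_tmul (φ : B →ₙₐ[R] R) (a : A) (b : B) :
    ridOfCharacter φ (a ⊗ₜ b) = φ b • a := rfl

theorem ridOfCharacter_surjective {φ : B →ₙₐ[R] R} (hφ : Function.Surjective φ) :
    Function.Surjective (ridOfCharacter φ : A ⊗[R] B → A) := by
  obtain ⟨u, hu⟩ := hφ 1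
  exact fun a => ⟨a ⊗ₜ u, by rw [ridOfCharacter_tmul, hu, one_smul]⟩

end Algebra.TensorProduct

/-- If `A₁ ⊗ A₂` is an evolution algebra and `A₂` has a two-sided ideal `J` of
codimension `1` with `A₂² ⊄ J`, then `A₁` is an evolution algebra. -/
theorem evolution_of_tensor_evolution (K : Type*) [Field K]
    (A₁ A₂ : Type*) [NonUnitalNonAssocRing A₁] [NonUnitalNonAssocRing A₂]
    [Module K A₁] [SMulCommClass K A₁ A₁] [IsScalarTower K A₁ A₁]
    [Module K A₂] [SMulCommClass K A₂ A₂] [IsScalarTower K A₂ A₂]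
    (hev : IsEvolutionAlgebra K (A₁ ⊗[K] A₂))
    (J : Submodule K A₂)
    (hJideal : ∀ (a x : A₂), x ∈ J → a * x ∈ J ∧ x * a ∈ J)
    (hcodim : Module.finrank K (A₂ ⧸ J) = 1)
    (hsq : ¬ algebraSquare K A₂ ≤ J) :
    IsEvolutionAlgebra K A₁ := by
  obtain ⟨φ, hφ⟩ := J.exists_surjective_character_of_finrank_quotient_eq_one hJideal hcodim hsq
  exact hev.of_surjective (Algebra.TensorProduct.ridOfCharacter φ)
    (Algebra.TensorProduct.ridOfCharacter_surjective hφ)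
end
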